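/- Suppose n is not prime and let p be the smallest prime divisor of n. Then there exists a subgroup H ≅ C_p × C_p of S_n such that Ш¹(H, A_{n-1}) ≅ Z/pZ, where A_{n-1} is the root lattice. -/

import Mathlib

open Function

section Core
variable (G : Type) [Group G]

/-- A map is `G`-equivariant. -/
def IsEquivMapP {M N : Type} [AddCommGroup M] [AddCommGroup N]
    [DistribMulAction G M] [DistribMulAction G N] (f : M → N) : Prop :=
  ∀ (g : G) (m : M), f (g • m) = g • f m

/-- `M` is a permutation `G`-lattice: it has a finite `ℤ`-basis permuted by `G`. -/
def IsPermLat (M : Type) [AddCommGroup M] [DistribMulAction G M] : Prop :=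
  ∃ (ι : Type) (_ : Fintype ι) (b : Module.Basis ι ℤ M) (σ : G → ι → ι),
    ∀ (g : G) (i : ι), g • (b i : M) = b (σ g i)

/-- `M` is a lattice: finitely generated and free over `ℤ`. -/
def IsLat (M : Type) [AddCommGroup M] : Prop := Module.Free ℤ M ∧ Module.Finite ℤ M

/-- A short exact sequence `0 → M → E → P → 0` of `G`-modules. -/
def ShortExactG (M E P : Type) [AddCommGroup M] [AddCommGroup E] [AddCommGroup P]
    [DistribMulAction G M] [DistribMulAction G E] [DistribMulAction G P] : Prop :=
  ∃ (i : M →+ E) (p : E →+ P), IsEquivMapP G i ∧ IsEquivMapP G p ∧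
    Injective i ∧ Surjective p ∧ i.range = p.ker

/-- Colliot-Thélène–Sansuc equivalence of `G`-lattices. -/
def LatEquiv (M N : Type) [AddCommGroup M] [AddCommGroup N]
    [DistribMulAction G M] [DistribMulAction G N] : Prop :=
  ∃ (E : Type) (_ : AddCommGroup E) (_ : DistribMulAction G E)
    (P : Type) (_ : AddCommGroup P) (_ : DistribMulAction G P)
    (Q : Type) (_ : AddCommGroup Q) (_ : DistribMulAction G Q),
    IsLat E ∧ IsPermLat G P ∧ IsPermLat G Q ∧
    ShortExactG G M E P ∧ ShortExactG G N E Q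

/-- `M` is stably permutation. -/
def IsStablyPerm (M : Type) [AddCommGroup M] [DistribMulAction G M] : Prop :=
  ∃ (P : Type) (_ : AddCommGroup P) (_ : DistribMulAction G P)
    (Q : Type) (_ : AddCommGroup Q) (_ : DistribMulAction G Q),
    IsPermLat G P ∧ IsPermLat G Q ∧
    ∃ e : (M × P) ≃+ Q, IsEquivMapP G e

/-- `M` is permutation projective: a direct summand of a permutation lattice. -/
def IsPermProj (M : Type) [AddCommGroup M] [DistribMulAction G M] : Prop :=
  ∃ (P : Type) (_ : AddCommGroup P) (_ : DistribMulAction G P), IsPermLat G P ∧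
    ∃ (i : M →+ P) (r : P →+ M), IsEquivMapP G i ∧ IsEquivMapP G r ∧ ∀ m, r (i m) = m

/-- `M` is quasi-permutation: it embeds into a permutation lattice with permutation quotient. -/
def IsQuasiPerm (M : Type) [AddCommGroup M] [DistribMulAction G M] : Prop :=
  ∃ (P : Type) (_ : AddCommGroup P) (_ : DistribMulAction G P)
    (Q : Type) (_ : AddCommGroup Q) (_ : DistribMulAction G Q),
    IsPermLat G P ∧ IsPermLat G Q ∧ ShortExactG G M P Q

variable (M : Type) [AddCommGroup M] [DistribMulAction G M]

/-- 1-cocycles. -/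
def Z1 : AddSubgroup (G → M) where
  carrier := {f | ∀ g h : G, f (g * h) = g • f h + f g}
  zero_mem' := by intro g h; simp
  add_mem' := by
    intro f f' hf hf' g h
    simp only [Pi.add_apply, hf g h, hf' g h, smul_add]; abel
  neg_mem' := by
    intro f hf g h
    simp only [Pi.neg_apply, hf g h, smul_neg]; abel

/-- The coboundary homomorphism. -/
def coboundHom : M →+ Z1 G M where
  toFun m := ⟨fun g => g • m - m, by intro g h; simp only [mul_smul, smul_sub]; abel⟩
  map_zero' := by apply Subtype.ext; funext g; simp
  map_add' := by
    intro a b; apply Subtype.ext; funext g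
    show g • (a + b) - (a + b) = (g • a - a) + (g • b - b)
    simp only [smul_add]; abel

/-- 1-coboundaries. -/
def B1 : AddSubgroup (Z1 G M) := (coboundHom G M).range

/-- First group cohomology `H¹(G, M)`. -/
abbrev H1 := Z1 G M ⧸ B1 G M

/-- Restriction of cocycles to a subgroup. -/
def resZ1 (H : Subgroup G) : Z1 G M →+ Z1 H M where
  toFun f := ⟨fun h => f.1 h, by
    intro a b
    have := f.2 (a : G) (b : G)
    exact this⟩
  map_zero' := rfl
  map_add' := fun _ _ => rfl

/-- Restriction on `H¹`. -/
def resH1 (H : Subgroup G) : H1 G M →+ H1 H M :=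
  QuotientAddGroup.map _ _ (resZ1 G M H) (by
    rintro _ ⟨m, rfl⟩
    exact ⟨m, Subtype.ext rfl⟩)

/-- `Ш¹(G, M)`. -/
def Sha1 : AddSubgroup (H1 G M) :=
  ⨅ g : G, (resH1 G M (Subgroup.zpowers g)).ker

/-- `M` is coflasque: `H¹(H, M) = 0` for all subgroups `H ≤ G`. -/
def IsCoflasque : Prop := ∀ H : Subgroup G, ∀ x y : H1 H M, x = y

end Core

section Core2
variable (G : Type) [Group G] (M : Type) [AddCommGroup M] [DistribMulAction G M]

/-- 2-cocycles. -/
def Z2 : AddSubgroup (G → G → M) where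
  carrier := {f | ∀ g h k : G, g • f h k - f (g * h) k + f g (h * k) - f g h = 0}
  zero_mem' := by intro g h k; simp
  add_mem' := by
    intro f f' hf hf' g h k
    have h1 := hf g h k; have h2 := hf' g h k
    simp only [Pi.add_apply, smul_add]
    calc g • f h k + g • f' h k - (f (g * h) k + f' (g * h) k) +
          (f g (h * k) + f' g (h * k)) - (f g h + f' g h)
        = (g • f h k - f (g * h) k + f g (h * k) - f g h) +
          (g • f' h k - f' (g * h) k + f' g (h * k) - f' g h) := by abel
      _ = 0 := by rw [h1, h2, add_zero]
  neg_mem' := by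
    intro f hf g h k
    have h1 := hf g h k
    simp only [Pi.neg_apply, smul_neg]
    calc -(g • f h k) - -f (g * h) k + -f g (h * k) - -f g h
        = -(g • f h k - f (g * h) k + f g (h * k) - f g h) := by abel
      _ = 0 := by rw [h1, neg_zero]

/-- The 2-coboundary homomorphism. -/
def cobound2Hom : (G → M) →+ Z2 G M where
  toFun u := ⟨fun g h => g • u h - u (g * h) + u g, by
    intro g h k
    simp only [mul_smul, smul_sub, smul_add, mul_assoc]
    abel⟩
  map_zero' := by apply Subtype.ext; funext g h; simp
  map_add' := by
    intro a b; apply Subtype.ext; funext g h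
    show g • (a h + b h) - (a (g * h) + b (g * h)) + (a g + b g)
        = (g • a h - a (g * h) + a g) + (g • b h - b (g * h) + b g)
    simp only [smul_add]; abel

/-- 2-coboundaries. -/
def B2 : AddSubgroup (Z2 G M) := (cobound2Hom G M).range

/-- Second group cohomology `H²(G, M)`. -/
abbrev H2 := Z2 G M ⧸ B2 G M

/-- Restriction of 2-cocycles to a subgroup. -/
def resZ2 (H : Subgroup G) : Z2 G M →+ Z2 H M where
  toFun f := ⟨fun a b => f.1 a b, by
    intro a b c
    have := f.2 (a : G) (b : G) (c : G)
    exact this⟩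
  map_zero' := rfl
  map_add' := fun _ _ => rfl

/-- Restriction on `H²`. -/
def resH2 (H : Subgroup G) : H2 G M →+ H2 H M :=
  QuotientAddGroup.map _ _ (resZ2 G M H) (by
    rintro _ ⟨u, rfl⟩
    exact ⟨fun h : H => u (h : G), Subtype.ext rfl⟩)

/-- `Ш²(G, M)`. -/
def Sha2 : AddSubgroup (H2 G M) :=
  ⨅ g : G, (resH2 G M (Subgroup.zpowers g)).ker

/-- The subgroup `2M`. -/
def twoSub : AddSubgroup M :=
  (AddMonoidHom.mk' (fun m : M => (2 : ℤ) • m) (by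
    intro a b
    show (2 : ℤ) • (a + b) = (2 : ℤ) • a + (2 : ℤ) • b
    rw [smul_add])).range

/-- `M/2M`. -/
abbrev ModTwo := M ⧸ twoSub M

noncomputable instance : SMul G (ModTwo M) :=
  ⟨fun g => QuotientAddGroup.map _ _ (DistribMulAction.toAddMonoidHom M g) (by
    rintro _ ⟨m, rfl⟩
    refine ⟨g • m, ?_⟩
    show (2 : ℤ) • (g • m) = g • ((2 : ℤ) • m)
    rw [smul_comm])⟩

theorem modTwo_smul_mk (g : G) (m : M) :
    g • (QuotientAddGroup.mk m : ModTwo M) = QuotientAddGroup.mk (g • m) := rfl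

noncomputable instance : DistribMulAction G (ModTwo M) where
  one_smul x := by
    obtain ⟨m, rfl⟩ := QuotientAddGroup.mk_surjective x
    rw [modTwo_smul_mk, one_smul]
  mul_smul g h x := by
    obtain ⟨m, rfl⟩ := QuotientAddGroup.mk_surjective x
    rw [modTwo_smul_mk, modTwo_smul_mk, modTwo_smul_mk, mul_smul]
  smul_zero g := map_zero (QuotientAddGroup.map _ _ (DistribMulAction.toAddMonoidHom M g) _)
  smul_add g x y := map_add (QuotientAddGroup.map _ _ (DistribMulAction.toAddMonoidHom M g) _) x y

variable [Finite G]

/-- Kernel of the norm map (for a finite group). -/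
def normKer : AddSubgroup M where
  carrier := {x | ∑ᶠ g : G, g • x = 0}
  zero_mem' := by simp
  add_mem' := by
    intro x y hx hy
    have hx' : ∑ᶠ g : G, g • x = 0 := hx
    have hy' : ∑ᶠ g : G, g • y = 0 := hy
    show ∑ᶠ g : G, g • (x + y) = 0
    simp only [smul_add]
    rw [finsum_add_distrib (Set.toFinite _) (Set.toFinite _), hx', hy', add_zero]
  neg_mem' := by
    intro x hx
    have hx' : ∑ᶠ g : G, g • x = 0 := hx
    show ∑ᶠ g : G, g • (-x) = 0
    simp only [smul_neg]
    rw [finsum_neg_distrib, hx', neg_zero]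

/-- The subgroup generated by elements `g • m - m`. -/
def augSub : AddSubgroup M := AddSubgroup.closure {x | ∃ (g : G) (m : M), x = g • m - m}

/-- Tate cohomology `Ĥ⁻¹(G, M)` (for a finite group `G`). -/
abbrev TateNeg1 := normKer G M ⧸ ((augSub G M).addSubgroupOf (normKer G M))

/-- `M` is flasque: `Ĥ⁻¹(H, M) = 0` for all subgroups `H ≤ G`. -/
def IsFlasque : Prop := ∀ H : Subgroup G, ∀ x y : TateNeg1 H M, x = y

end Core2

section Core3
variable (G : Type) [Group G]

/-- `M` is equivalent to a direct summand of a quasi-permutation `G`-lattice. -/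
def IsEquivSummandQP (M : Type) [AddCommGroup M] [DistribMulAction G M] : Prop :=
  ∃ (S : Type) (_ : AddCommGroup S) (_ : DistribMulAction G S)
    (D : Type) (_ : AddCommGroup D) (_ : DistribMulAction G D)
    (D' : Type) (_ : AddCommGroup D') (_ : DistribMulAction G D'),
    IsLat S ∧ IsQuasiPerm G S ∧ (∃ e : (D × D') ≃+ S, IsEquivMapP G e) ∧
    LatEquiv G M D

end Core3

section Tensor
open TensorProduct
variable (G : Type) [Group G] (M : Type) [AddCommGroup M] [DistribMulAction G M]

/-- The action of `g : G` as a `ℤ`-linear map. -/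
def gLin (g : G) : M →ₗ[ℤ] M := (DistribMulAction.toAddMonoidHom M g).toIntLinearMap

noncomputable instance tensorSMul : SMul G (M ⊗[ℤ] M) :=
  ⟨fun g => TensorProduct.map (gLin G M g) (gLin G M g)⟩

theorem tsmul_def (g : G) (x : M ⊗[ℤ] M) :
    g • x = TensorProduct.map (gLin G M g) (gLin G M g) x := rfl

theorem gLin_one : gLin G M 1 = LinearMap.id := by
  ext m; show (1 : G) • m = m; rw [one_smul]

theorem gLin_mul (g h : G) : gLin G M (g * h) = (gLin G M g).comp (gLin G M h) := by
  ext m; show (g * h) • m = g • h • m; rw [mul_smul]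

noncomputable instance tensorAct : DistribMulAction G (M ⊗[ℤ] M) where
  one_smul x := by rw [tsmul_def, gLin_one, TensorProduct.map_id]; rfl
  mul_smul g h x := by
    rw [tsmul_def, tsmul_def, tsmul_def, gLin_mul, TensorProduct.map_comp]; rfl
  smul_zero g := map_zero _
  smul_add g x y := map_add _ x y

/-- Generators of the symmetric relation. -/
def symSpan : @Submodule ℤ (M ⊗[ℤ] M) _ _ TensorProduct.instModule :=
  @Submodule.span ℤ (M ⊗[ℤ] M) _ _ TensorProduct.instModule {x | ∃ a b : M, x = a ⊗ₜ[ℤ] b - b ⊗ₜ[ℤ] a}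

/-- Generators of the wedge relation. -/
def wedSpan : @Submodule ℤ (M ⊗[ℤ] M) _ _ TensorProduct.instModule :=
  @Submodule.span ℤ (M ⊗[ℤ] M) _ _ TensorProduct.instModule {x | ∃ a : M, x = a ⊗ₜ[ℤ] a}

/-- The second symmetric power `Sym²M`. -/
abbrev Sym2Q := (M ⊗[ℤ] M) ⧸ symSpan M

/-- The second exterior power `∧²M`. -/
abbrev Wedge2Q := (M ⊗[ℤ] M) ⧸ wedSpan M

theorem symSpan_le_comap (g : G) :
    symSpan M ≤ (symSpan M).comap (TensorProduct.map (gLin G M g) (gLin G M g)) := by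
  rw [← Submodule.map_le_iff_le_comap, symSpan, Submodule.map_span]
  refine Submodule.span_le.2 ?_
  rintro _ ⟨_, ⟨a, b, rfl⟩, rfl⟩
  refine Submodule.subset_span ?_
  exact ⟨g • a, g • b, by simp [TensorProduct.map_tmul]; rfl⟩

theorem wedSpan_le_comap (g : G) :
    wedSpan M ≤ (wedSpan M).comap (TensorProduct.map (gLin G M g) (gLin G M g)) := by
  rw [← Submodule.map_le_iff_le_comap, wedSpan, Submodule.map_span]
  refine Submodule.span_le.2 ?_
  rintro _ ⟨_, ⟨a, rfl⟩, rfl⟩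
  exact Submodule.subset_span ⟨g • a, by simp [TensorProduct.map_tmul]; rfl⟩

noncomputable instance sym2SMul : SMul G (Sym2Q M) :=
  ⟨fun g => Submodule.mapQ _ _ (TensorProduct.map (gLin G M g) (gLin G M g))
    (symSpan_le_comap G M g)⟩

noncomputable instance wedge2SMul : SMul G (Wedge2Q M) :=
  ⟨fun g => Submodule.mapQ _ _ (TensorProduct.map (gLin G M g) (gLin G M g))
    (wedSpan_le_comap G M g)⟩

theorem sym2_smul_mk (g : G) (x : M ⊗[ℤ] M) :
    g • ((symSpan M).mkQ x) = (symSpan M).mkQ (g • x) :=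
  Submodule.mapQ_apply _ _ _ _

theorem wedge2_smul_mk (g : G) (x : M ⊗[ℤ] M) :
    g • ((wedSpan M).mkQ x) = (wedSpan M).mkQ (g • x) :=
  Submodule.mapQ_apply _ _ _ _

noncomputable instance sym2Act : DistribMulAction G (Sym2Q M) where
  one_smul x := by
    obtain ⟨y, rfl⟩ := (symSpan M).mkQ_surjective x
    rw [sym2_smul_mk, one_smul]
  mul_smul g h x := by
    obtain ⟨y, rfl⟩ := (symSpan M).mkQ_surjective x
    rw [sym2_smul_mk, sym2_smul_mk, sym2_smul_mk, mul_smul]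
  smul_zero g := map_zero (Submodule.mapQ _ _ _ (symSpan_le_comap G M g))
  smul_add g x y := map_add (Submodule.mapQ _ _ _ (symSpan_le_comap G M g)) x y

noncomputable instance wedge2Act : DistribMulAction G (Wedge2Q M) where
  one_smul x := by
    obtain ⟨y, rfl⟩ := (wedSpan M).mkQ_surjective x
    rw [wedge2_smul_mk, one_smul]
  mul_smul g h x := by
    obtain ⟨y, rfl⟩ := (wedSpan M).mkQ_surjective x
    rw [wedge2_smul_mk, wedge2_smul_mk, wedge2_smul_mk, mul_smul]
  smul_zero g := map_zero (Submodule.mapQ _ _ _ (wedSpan_le_comap G M g))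
  smul_add g x y := map_add (Submodule.mapQ _ _ _ (wedSpan_le_comap G M g)) x y

variable {M} {N : Type} [AddCommGroup N]

/-- The map `Sym²f` induced by a linear map `f`. -/
noncomputable def sym2Map (f : M →ₗ[ℤ] N) : Sym2Q M →ₗ[ℤ] Sym2Q N :=
  Submodule.mapQ _ _ (TensorProduct.map f f) (by
    rw [← Submodule.map_le_iff_le_comap, symSpan, Submodule.map_span]
    refine Submodule.span_le.2 ?_
    rintro _ ⟨_, ⟨a, b, rfl⟩, rfl⟩
    exact Submodule.subset_span ⟨f a, f b, by simp [TensorProduct.map_tmul]⟩)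

/-- The map `∧²f` induced by a linear map `f`. -/
noncomputable def wedge2Map (f : M →ₗ[ℤ] N) : Wedge2Q M →ₗ[ℤ] Wedge2Q N :=
  Submodule.mapQ _ _ (TensorProduct.map f f) (by
    rw [← Submodule.map_le_iff_le_comap, wedSpan, Submodule.map_span]
    refine Submodule.span_le.2 ?_
    rintro _ ⟨_, ⟨a, rfl⟩, rfl⟩
    exact Submodule.subset_span ⟨f a, by simp [TensorProduct.map_tmul]⟩)

end Tensor

section PermMod
variable (G : Type) [Group G] (X : Type) [MulAction G X]

/-- The permutation action on `ℤ[X] = X → ℤ`. -/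
instance permSMul : SMul G (X → ℤ) := ⟨fun g f x => f (g⁻¹ • x)⟩

theorem perm_smul_def (g : G) (f : X → ℤ) (x : X) : (g • f) x = f (g⁻¹ • x) := rfl

instance permAct : DistribMulAction G (X → ℤ) where
  one_smul f := funext fun x => by rw [perm_smul_def, inv_one, one_smul]
  mul_smul g h f := funext fun x => by
    rw [perm_smul_def, perm_smul_def, perm_smul_def, mul_inv_rev, mul_smul]
  smul_zero g := rfl
  smul_add g f f' := rfl

variable [Fintype X]

/-- The augmentation kernel `A = ker(ℤ[X] → ℤ)`. -/
def augKer : AddSubgroup (X → ℤ) where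
  carrier := {f | ∑ x, f x = 0}
  zero_mem' := by simp
  add_mem' := by
    intro a b ha hb
    have ha' : ∑ x, a x = 0 := ha
    have hb' : ∑ x, b x = 0 := hb
    show ∑ x, (a x + b x) = 0
    rw [Finset.sum_add_distrib, ha', hb', add_zero]
  neg_mem' := by
    intro a ha
    have ha' : ∑ x, a x = 0 := ha
    show ∑ x, (-(a x)) = 0
    rw [Finset.sum_neg_distrib, ha', neg_zero]

theorem smul_mem_augKer (g : G) (f : X → ℤ) (hf : f ∈ augKer X) :
    g • f ∈ augKer X := by
  have hf' : ∑ x, f x = 0 := hf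
  show ∑ x, f (g⁻¹ • x) = 0
  exact (Equiv.sum_comp (MulAction.toPerm (g⁻¹ : G)) f).trans hf'

instance augKerSMul : SMul G (augKer X) :=
  ⟨fun g f => ⟨g • (f : X → ℤ), smul_mem_augKer G X g f f.2⟩⟩

theorem augKer_smul_def (g : G) (f : augKer X) :
    ((g • f : augKer X) : X → ℤ) = g • (f : X → ℤ) := rfl

instance augKerAct : DistribMulAction G (augKer X) where
  one_smul f := Subtype.ext (by rw [augKer_smul_def, one_smul])
  mul_smul g h f := Subtype.ext (by
    rw [augKer_smul_def, augKer_smul_def, augKer_smul_def, mul_smul])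
  smul_zero g := Subtype.ext (by
    rw [augKer_smul_def]
    show g • (0 : X → ℤ) = 0
    rw [smul_zero])
  smul_add g f f' := Subtype.ext (by
    show g • ((f : X → ℤ) + f') = g • (f : X → ℤ) + g • (f' : X → ℤ)
    rw [smul_add])

end PermMod

section P2sec
variable (G : Type) [Group G]

/-- The set of 2-element subsets of `X`. -/
def P2 (X : Type) [DecidableEq X] : Type := {s : Finset X // s.card = 2}

noncomputable instance (X : Type) [DecidableEq X] [Fintype X] : Fintype (P2 X) := by
  unfold P2; infer_instance

instance p2SMul (X : Type) [DecidableEq X] [MulAction G X] : SMul G (P2 X) :=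
  ⟨fun g s => ⟨s.1.image (fun x => g • x), by
    rw [Finset.card_image_of_injective _ (MulAction.injective g)]; exact s.2⟩⟩

theorem p2_smul_def (X : Type) [DecidableEq X] [MulAction G X] (g : G) (s : P2 X) :
    (g • s).1 = s.1.image (fun x => g • x) := rfl

instance p2Act (X : Type) [DecidableEq X] [MulAction G X] : MulAction G (P2 X) where
  one_smul s := Subtype.ext (by
    rw [p2_smul_def]
    simp)
  mul_smul g h s := Subtype.ext (by
    simp only [p2_smul_def, Finset.image_image]
    refine Finset.image_congr ?_
    intro x _
    exact mul_smul g h x)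

end P2sec

/-- The root lattice `A_{n-1}` as an `S_n`-lattice. -/
abbrev rootLat (n : ℕ) := augKer (Fin n)

/-!
For a finite group `C` permuting a finite set `X`, with `A = augKer X`, the sequence
`0 → A → ℤ[X] → ℤ → 0` and `H¹(C, ℤ[X]) = 0` give `H¹(C, A) ≅ ℤ ⧸ ε(ℤ[X]^C)`, and
the class of `t` lies in `Ш¹` iff `t ∈ ε(ℤ[X]^⟨σ⟩)` for every `σ ∈ C`. Write `n = p m` with
`p ≤ m`. If `p < m`, let `(ZMod p)²` act on `m` fibres `ZMod p`, translating fibre `j` through a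
linear functional, such that the kernels of these functionals run over all `p + 1` lines: the
fibres are orbits of size `p`, so `H¹ = ℤ/p`, and every element fixes a point, so `Ш¹ = H¹`.
If `m = p`, take the regular action of `(ZMod p)²`: then `H¹ = ℤ/p²`, while the orbits of every
cyclic subgroup have size dividing `p`, and those of `⟨(1, 0)⟩` have size exactly `p`, so
`Ш¹ = pℤ/p²ℤ`.
-/

open scoped Pointwise

section Invariants

variable {C : Type} [Group C] {X : Type} [MulAction C X]

theorem smul_invariant_iff_mem_stabilizer {v : X → ℤ} {c : C} :
    (∀ x, v (c • x) = v x) ↔ c ∈ MulAction.stabilizer C v := by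
  rw [← inv_mem_iff, MulAction.mem_stabilizer_iff, funext_iff]
  simp only [perm_smul_def, inv_inv]

variable [Fintype X]

variable (C X) in
/-- The image `ε(ℤ[X]^C)` of the invariants under the augmentation `ε`;
`H¹(C, augKer X) ≅ ℤ ⧸ ε(ℤ[X]^C)`. -/
def invariantAug : AddSubgroup ℤ where
  carrier := {t | ∃ v : X → ℤ, (∀ (c : C) (x : X), v (c • x) = v x) ∧ ∑ x, v x = t}
  zero_mem' := ⟨0, fun _ _ => rfl, by simp⟩
  add_mem' := by
    rintro _ _ ⟨v, hv, rfl⟩ ⟨w, hw, rfl⟩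
    exact ⟨v + w, fun c x => by simp [hv c x, hw c x], Finset.sum_add_distrib⟩
  neg_mem' := by
    rintro _ ⟨v, hv, rfl⟩
    exact ⟨-v, fun c x => by simp [hv c x], by simp⟩

theorem mem_invariantAug_zpowers_iff (c : C) {t : ℤ} :
    t ∈ invariantAug (Subgroup.zpowers c) X ↔
      ∃ v : X → ℤ, (∀ x, v (c • x) = v x) ∧ ∑ x, v x = t := by
  refine exists_congr fun v => and_congr_left fun _ => ⟨fun hv => hv ⟨c, Subgroup.mem_zpowers c⟩,
    fun hv s => ?_⟩
  rw [smul_invariant_iff_mem_stabilizer] at hv ⊢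
  exact Subgroup.zpowers_le.2 hv s.2

theorem intCast_card_mem_invariantAug [DecidableEq X] (S : Finset X)
    (hS : ∀ (c : C) (x : X), c • x ∈ S ↔ x ∈ S) : (S.card : ℤ) ∈ invariantAug C X :=
  ⟨fun x => if x ∈ S then 1 else 0, fun c x => by simp only [hS], by simp⟩

theorem intCast_card_mem_invariantAug_zpowers [DecidableEq X] (c : C) (S : Finset X)
    (hS : ∀ x, c • x ∈ S ↔ x ∈ S) : (S.card : ℤ) ∈ invariantAug (Subgroup.zpowers c) X :=
  intCast_card_mem_invariantAug S fun s => MulAction.mem_stabilizer_finset.1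
    (Subgroup.zpowers_le.2 (MulAction.mem_stabilizer_finset.2 hS) s.2)

theorem invariantAug_zpowers_coe (H : Subgroup (Equiv.Perm X)) (σ : H) :
    invariantAug (Subgroup.zpowers σ) X = invariantAug (Subgroup.zpowers (σ : Equiv.Perm X)) X := by
  ext t
  rw [mem_invariantAug_zpowers_iff, mem_invariantAug_zpowers_iff]
  rfl

theorem invariantAug_zpowers_eq_top_of_apply_eq [DecidableEq X] {σ : Equiv.Perm X} {x : X}
    (hx : σ x = x) : invariantAug (Subgroup.zpowers σ) X = ⊤ := by
  have h := intCast_card_mem_invariantAug_zpowers σ {x} fun y => by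
    rw [Finset.mem_singleton, Finset.mem_singleton, Equiv.Perm.smul_def]
    nth_rewrite 1 [← hx]
    exact σ.injective.eq_iff
  rw [Finset.card_singleton, Nat.cast_one] at h
  rw [eq_top_iff, ← Int.zmultiples_one, AddSubgroup.zmultiples_le]
  exact h

theorem invariantAug_map_permCongr {Y : Type} [Fintype Y] (e : Y ≃ X)
    (K : Subgroup (Equiv.Perm Y)) :
    invariantAug (K.map e.permCongrHom.toMonoidHom) X = invariantAug K Y := by
  ext t
  constructor
  · rintro ⟨v, hv, rfl⟩
    refine ⟨v ∘ e, fun τ y => ?_, Equiv.sum_comp e v⟩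
    have h : v (e.permCongr τ (e y)) = v (e y) := hv ⟨_, τ, τ.2, rfl⟩ (e y)
    rw [Equiv.permCongr_apply, Equiv.symm_apply_apply] at h
    exact h
  · rintro ⟨w, hw, rfl⟩
    refine ⟨w ∘ e.symm, ?_, Equiv.sum_comp e.symm w⟩
    rintro ⟨_, τ, hτ, rfl⟩ x
    show w (e.symm (e.permCongr τ x)) = w (e.symm x)
    simpa using hw ⟨τ, hτ⟩ (e.symm x)

end Invariants

section Cohomology

attribute [-instance] augKerSMul augKerAct

variable {C : Type} [Group C]

theorem Z1_apply_one {M : Type} [AddCommGroup M] [DistribMulAction C M] (f : Z1 C M) :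
    f.1 1 = 0 := by
  have h := f.2 1 1
  rw [one_mul, one_smul, left_eq_add] at h
  exact h

variable {X : Type} [Fintype X] [MulAction C X]

theorem inv_smul_sub_mem_augKer (u : X → ℤ) (c : C) :
    (fun x => u (c⁻¹ • x) - u x) ∈ augKer X := by
  show ∑ x, (u (c⁻¹ • x) - u x) = 0
  rw [Finset.sum_sub_distrib, sub_eq_zero]
  exact Equiv.sum_comp (MulAction.toPerm c⁻¹) u

variable [DistribMulAction C (augKer X)]

variable (C X) in
/-- Subgroups of `Equiv.Perm X` act on `augKer X` through instances that are not syntactically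
`augKerAct`, so the permutation action is assumed as this hypothesis instead. -/
def IsPermActionOnAugKer : Prop :=
  ∀ (c : C) (v : augKer X) (x : X), (c • v).1 x = v.1 (c⁻¹ • x)

variable (hact : IsPermActionOnAugKer C X)

include hact in
theorem augCoboundary_mem_Z1 (u : X → ℤ) :
    (fun c : C => (⟨fun x => u (c⁻¹ • x) - u x, inv_smul_sub_mem_augKer u c⟩ : augKer X))
      ∈ Z1 C (augKer X) := by
  intro g h
  ext x
  rw [AddSubgroup.coe_add, Pi.add_apply, hact]
  show u ((g * h)⁻¹ • x) - u x = (u (h⁻¹ • g⁻¹ • x) - u (g⁻¹ • x)) + (u (g⁻¹ • x) - u x)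
  rw [mul_inv_rev, mul_smul, sub_add_sub_cancel]

def augCoboundary : (X → ℤ) →+ Z1 C (augKer X) where
  toFun u := ⟨_, augCoboundary_mem_Z1 hact u⟩
  map_zero' := by ext; simp
  map_add' u u' := by
    ext c x
    show (u + u') (c⁻¹ • x) - (u + u') x = (u (c⁻¹ • x) - u x) + (u' (c⁻¹ • x) - u' x)
    simp only [Pi.add_apply]
    ring

theorem augCoboundary_apply (u : X → ℤ) (c : C) (x : X) :
    ((augCoboundary hact u).1 c).1 x = u (c⁻¹ • x) - u x :=
  rfl

section Cocycle

variable (f : Z1 C (augKer X))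

include hact in
theorem cocycle_apply_mul_apply (g h : C) (x : X) :
    (f.1 (g * h)).1 x = (f.1 h).1 (g⁻¹ • x) + (f.1 g).1 x := by
  rw [f.2 g h, AddSubgroup.coe_add, Pi.add_apply, hact]

include hact in
theorem cocycle_apply_inv_apply (g : C) (x : X) : (f.1 g⁻¹).1 (g⁻¹ • x) = -(f.1 g).1 x := by
  have h := cocycle_apply_mul_apply hact f g g⁻¹ x
  rw [mul_inv_cancel, Z1_apply_one] at h
  exact eq_neg_of_add_eq_zero_left h.symm

include hact in
/-- On a point fixed by `s`, the map `k ↦ f (s ^ k)` is additive; as `s` has finite order, it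
vanishes. -/
theorem cocycle_apply_eq_zero_of_smul_eq [Finite C] {s : C} {x : X} (hs : s • x = x) :
    (f.1 s).1 x = 0 := by
  have hpow : ∀ k : ℕ, (f.1 (s ^ k)).1 x = k * (f.1 s).1 x := by
    intro k
    induction k with
    | zero => simp [Z1_apply_one]
    | succ k ih =>
      have hk : (s ^ k)⁻¹ • x = x :=
        inv_smul_eq_iff.2 ((MulAction.stabilizer C x).pow_mem hs k).symm
      rw [pow_succ, cocycle_apply_mul_apply hact, hk, ih]
      push_cast
      ring
  have h := hpow (orderOf s)
  rw [pow_orderOf_eq_one, Z1_apply_one] at h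
  exact (mul_eq_zero.mp h.symm).resolve_left (by exact_mod_cast (orderOf_pos s).ne')

include hact in
theorem cocycle_apply_eq_of_smul_eq [Finite C] {t t' : C} {x y : X} (ht : t • y = x)
    (ht' : t' • y = x) : (f.1 t').1 x = (f.1 t).1 x := by
  have hfix : (t⁻¹ * t') • y = y := by rw [mul_smul, ht', ← ht, inv_smul_smul]
  have h := cocycle_apply_mul_apply hact f t (t⁻¹ * t') x
  rw [mul_inv_cancel_left] at h
  rw [h, ← ht, inv_smul_smul, cocycle_apply_eq_zero_of_smul_eq hact f hfix, zero_add]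

end Cocycle

/-- `H¹(C, ℤ[X]) = 0`; `u` is built from a choice of a representative in each orbit. -/
theorem augCoboundary_surjective [Finite C] : Function.Surjective (augCoboundary hact) := by
  intro f
  let r : X → X := fun x => (Quotient.mk (MulAction.orbitRel C X) x).out
  have hr : ∀ x, ∃ t : C, t • r x = x := fun x => by
    obtain ⟨g, hg⟩ := MulAction.orbitRel_apply.1 (Quotient.mk_out (s := MulAction.orbitRel C X) x)
    exact ⟨g⁻¹, inv_smul_eq_iff.2 hg.symm⟩
  have hr_smul : ∀ (g : C) (x : X), r (g • x) = r x := fun g x =>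
    congrArg Quotient.out (Quotient.sound (MulAction.mem_orbit x g))
  choose τ hτ using hr
  refine ⟨fun x => -(f.1 (τ x)).1 x, ?_⟩
  ext g x
  have hrep : (f.1 (τ (g⁻¹ • x))).1 (g⁻¹ • x) = (f.1 (g⁻¹ * τ x)).1 (g⁻¹ • x) :=
    cocycle_apply_eq_of_smul_eq hact f (y := r x) (by rw [mul_smul, hτ])
      (by rw [← hr_smul g⁻¹ x, hτ])
  have hmul := cocycle_apply_mul_apply hact f g⁻¹ (τ x) (g⁻¹ • x)
  rw [inv_inv, smul_inv_smul, cocycle_apply_inv_apply hact] at hmul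
  rw [augCoboundary_apply, hrep, hmul]
  ring

theorem augCoboundary_eq_zero_iff {v : X → ℤ} :
    augCoboundary hact v = 0 ↔ ∀ (c : C) (x : X), v (c • x) = v x := by
  constructor
  · intro h c x
    have h' := congrArg (fun f : Z1 C (augKer X) => (f.1 c⁻¹).1 x) h
    simpa [augCoboundary_apply, sub_eq_zero] using h'
  · intro hv
    ext c x
    rw [augCoboundary_apply, hv, sub_self]
    rfl

theorem coboundHom_eq_augCoboundary (m : augKer X) :
    coboundHom C (augKer X) m = augCoboundary hact m.1 := by
  ext c x
  show (c • m - m).1 x = m.1 (c⁻¹ • x) - m.1 x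
  rw [AddSubgroup.coe_sub, Pi.sub_apply, hact]

theorem mk_augCoboundary_eq_zero_iff (u : X → ℤ) :
    (QuotientAddGroup.mk (augCoboundary hact u) : H1 C (augKer X)) = 0 ↔
      ∑ x, u x ∈ invariantAug C X := by
  rw [QuotientAddGroup.eq_zero_iff]
  change (∃ m, coboundHom C (augKer X) m = augCoboundary hact u) ↔ _
  simp_rw [coboundHom_eq_augCoboundary hact]
  constructor
  · rintro ⟨m, hm⟩
    refine ⟨u - m.1, (augCoboundary_eq_zero_iff hact).1 (by rw [map_sub, hm, sub_self]), ?_⟩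
    have hm0 : ∑ x, m.1 x = 0 := m.2
    simp only [Pi.sub_apply, Finset.sum_sub_distrib, hm0, sub_zero]
  · rintro ⟨v, hv, hsum⟩
    have hmem : u - v ∈ augKer X := by
      show ∑ x, (u x - v x) = 0
      rw [Finset.sum_sub_distrib, hsum, sub_self]
    refine ⟨⟨u - v, hmem⟩, ?_⟩
    rw [map_sub, (augCoboundary_eq_zero_iff hact).2 hv, sub_zero]

variable [DecidableEq X]

def h1Class (x₀ : X) : ℤ →+ H1 C (augKer X) :=
  (QuotientAddGroup.mk' _).comp ((augCoboundary hact).comp (AddMonoidHom.single (fun _ => ℤ) x₀))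

theorem mk_augCoboundary_eq_h1Class (x₀ : X) (u : X → ℤ) :
    (QuotientAddGroup.mk (augCoboundary hact u) : H1 C (augKer X)) =
      h1Class hact x₀ (∑ x, u x) := by
  rw [← sub_eq_zero, h1Class, AddMonoidHom.comp_apply, AddMonoidHom.comp_apply,
    QuotientAddGroup.mk'_apply, ← QuotientAddGroup.mk_sub, ← map_sub,
    mk_augCoboundary_eq_zero_iff]
  simp only [Pi.sub_apply, Finset.sum_sub_distrib, AddMonoidHom.single_apply,
    Fintype.sum_pi_single', sub_self, zero_mem]

theorem h1Class_surjective [Finite C] (x₀ : X) : Function.Surjective (h1Class hact x₀) := by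
  intro q
  obtain ⟨f, rfl⟩ := QuotientAddGroup.mk_surjective q
  obtain ⟨u, rfl⟩ := augCoboundary_surjective hact f
  exact ⟨_, (mk_augCoboundary_eq_h1Class hact x₀ u).symm⟩

theorem h1Class_eq_zero_iff (x₀ : X) {t : ℤ} : h1Class hact x₀ t = 0 ↔ t ∈ invariantAug C X := by
  rw [h1Class, AddMonoidHom.comp_apply, AddMonoidHom.comp_apply, QuotientAddGroup.mk'_apply,
    mk_augCoboundary_eq_zero_iff, AddMonoidHom.single_apply, Fintype.sum_pi_single']

theorem h1Class_mem_sha1_iff (x₀ : X) {t : ℤ} :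
    h1Class hact x₀ t ∈ Sha1 C (augKer X) ↔ ∀ c : C, t ∈ invariantAug (Subgroup.zpowers c) X := by
  rw [Sha1, AddSubgroup.mem_iInf]
  exact forall_congr' fun c => AddMonoidHom.mem_ker.trans
    (h1Class_eq_zero_iff (C := Subgroup.zpowers c) (fun s v x => hact s v x) x₀)

include hact in
/-- `Ш¹(C, augKer X) ≅ (⋂_σ ε(ℤ[X]^⟨σ⟩)) ⧸ ε(ℤ[X]^C) = c ℤ ⧸ c p ℤ`. -/
theorem nonempty_sha1_addEquiv_zmod [Finite C] (x₀ : X) {c : ℤ} (hc : c ≠ 0) {p : ℕ}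
    (hC : invariantAug C X = AddSubgroup.zmultiples (c * p))
    (hcyc : ⨅ σ : C, invariantAug (Subgroup.zpowers σ) X = AddSubgroup.zmultiples c) :
    Nonempty (Sha1 C (augKer X) ≃+ ZMod p) := by
  have hmem : ∀ t, h1Class hact x₀ t ∈ Sha1 C (augKer X) ↔ c ∣ t := fun t => by
    rw [h1Class_mem_sha1_iff, ← Int.mem_zmultiples_iff, ← hcyc, AddSubgroup.mem_iInf]
  let Θ : ℤ →+ Sha1 C (augKer X) :=
    ((h1Class hact x₀).comp (AddMonoidHom.mulLeft c)).codRestrict _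
      fun k => (hmem _).2 (dvd_mul_right c k)
  have hsurj : Function.Surjective Θ := by
    rintro ⟨q, hq⟩
    obtain ⟨t, rfl⟩ := h1Class_surjective hact x₀ q
    obtain ⟨k, rfl⟩ := (hmem t).1 hq
    exact ⟨k, rfl⟩
  have hker : Θ.ker = AddSubgroup.zmultiples (p : ℤ) := by
    ext k
    rw [AddMonoidHom.mem_ker, ← Subtype.val_inj]
    change h1Class hact x₀ (c * k) = 0 ↔ _
    rw [h1Class_eq_zero_iff, hC, Int.mem_zmultiples_iff, Int.mem_zmultiples_iff,
      mul_dvd_mul_iff_left hc]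
  exact ⟨((QuotientAddGroup.quotientAddEquivOfEq hker).symm.trans
    (QuotientAddGroup.quotientKerEquivOfSurjective Θ hsurj)).symm.trans
    (Int.quotientZMultiplesNatEquivZMod p)⟩

end Cohomology

theorem exists_subgroup_sha1_addEquiv_zmod {G Y : Type} [Group G] [Finite G] [Fintype Y]
    [Nonempty Y] {n : ℕ} (ρ : G →* Equiv.Perm Y) (hρ : Function.Injective ρ) (e : Y ≃ Fin n)
    {c : ℤ} (hc : c ≠ 0) {p : ℕ}
    (hG : invariantAug ρ.range Y = AddSubgroup.zmultiples (c * p))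
    (hcyc : ⨅ g : G, invariantAug (Subgroup.zpowers (ρ g)) Y = AddSubgroup.zmultiples c) :
    ∃ H : Subgroup (Equiv.Perm (Fin n)),
      Nonempty (H ≃* G) ∧ Nonempty (Sha1 H (rootLat n) ≃+ ZMod p) := by
  set ρ' := e.permCongrHom.toMonoidHom.comp ρ
  have hρ' : Function.Injective ρ' := e.permCongrHom.injective.comp hρ
  refine ⟨ρ'.range, ⟨(MonoidHom.ofInjective hρ').symm⟩,
    nonempty_sha1_addEquiv_zmod (fun _ _ _ => rfl) (e (Classical.arbitrary Y)) hc ?_ ?_⟩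
  · rw [← MonoidHom.map_range, invariantAug_map_permCongr, hG]
  · rw [← ρ'.rangeRestrict_surjective.iInf_comp, ← hcyc]
    refine iInf_congr fun g => ?_
    rw [invariantAug_zpowers_coe, MonoidHom.coe_rangeRestrict, MonoidHom.comp_apply,
      ← MonoidHom.map_zpowers, invariantAug_map_permCongr]

theorem sum_eq_mul_of_periodic_one {p : ℕ} [NeZero p] {w : ZMod p → ℤ}
    (hw : Function.Periodic w 1) : ∑ t, w t = p * w 0 := by
  have h : ∀ t, w t = w 0 := fun t => by simpa using hw.nat_mul_eq t.val
  rw [Finset.sum_congr rfl fun t _ => h t, Finset.sum_const, Finset.card_univ, ZMod.card,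
    nsmul_eq_mul]

section FiberTranslation

variable {Y A : Type} [AddCommGroup A] {p : ℕ}

def fiberTranslation (φ : Y → A →+ ZMod p) : Multiplicative A →* Equiv.Perm (Y × ZMod p) where
  toFun a := Equiv.prodShear (Equiv.refl Y) fun y => Equiv.addRight (φ y a.toAdd)
  map_one' := by ext ⟨y, t⟩ <;> simp
  map_mul' a b := by ext ⟨y, t⟩ <;> simp; abel

theorem fiberTranslation_apply (φ : Y → A →+ ZMod p) (a : Multiplicative A) (y : Y) (t : ZMod p) :
    fiberTranslation φ a (y, t) = (y, t + φ y a.toAdd) :=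
  rfl

theorem fiberTranslation_injective {φ : Y → A →+ ZMod p} (hφ : ∀ a, (∀ y, φ y a = 0) → a = 0) :
    Function.Injective (fiberTranslation φ) := by
  refine (injective_iff_map_eq_one _).2 fun a ha => ?_
  have h := hφ a.toAdd fun y => by
    simpa [fiberTranslation_apply] using congrArg Prod.snd (Equiv.ext_iff.1 ha (y, 0))
  exact toAdd_eq_zero.1 h

variable [NeZero p] [Fintype Y] [DecidableEq Y]

theorem invariantAug_range_fiberTranslation [Nonempty Y] {φ : Y → A →+ ZMod p}
    (hφ : ∀ y, ∃ a, φ y a = 1) :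
    invariantAug (fiberTranslation φ).range (Y × ZMod p) = AddSubgroup.zmultiples (p : ℤ) := by
  apply le_antisymm
  · rintro _ ⟨v, hv, rfl⟩
    have hper : ∀ y, Function.Periodic (fun t => v (y, t)) 1 := fun y t => by
      obtain ⟨a, ha⟩ := hφ y
      have h : v (fiberTranslation φ (.ofAdd a) (y, t)) = v (y, t) := hv ⟨_, .ofAdd a, rfl⟩ (y, t)
      rwa [fiberTranslation_apply, toAdd_ofAdd, ha] at h
    rw [Int.mem_zmultiples_iff, Fintype.sum_prod_type]
    exact Finset.dvd_sum fun y _ => by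
      rw [sum_eq_mul_of_periodic_one (hper y)]
      exact dvd_mul_right _ _
  · obtain y₀ := Classical.arbitrary Y
    have h := intCast_card_mem_invariantAug ({y₀} ×ˢ (Finset.univ : Finset (ZMod p)))
      (C := (fiberTranslation φ).range) fun ⟨_, a, ha⟩ ⟨y, t⟩ => by
        subst ha
        show fiberTranslation φ a (y, t) ∈ _ ↔ _
        simp [fiberTranslation_apply]
    rw [Finset.card_product, Finset.card_singleton, Finset.card_univ, ZMod.card, one_mul] at h
    rwa [AddSubgroup.zmultiples_le]

theorem invariantAug_zpowers_fiberTranslation {φ : Y → A →+ ZMod p} {a : Multiplicative A} {y : Y}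
    (h : φ y a.toAdd = 0) :
    invariantAug (Subgroup.zpowers (fiberTranslation φ a)) (Y × ZMod p) = ⊤ :=
  invariantAug_zpowers_eq_top_of_apply_eq (x := (y, 0)) (by simp [fiberTranslation_apply, h])

end FiberTranslation

section Translation

variable (V : Type) [AddCommGroup V]

abbrev translation : Multiplicative V →* Equiv.Perm V := MulAction.toPermHom (Multiplicative V) V

variable {V}

theorem translation_apply (g : Multiplicative V) (y : V) : translation V g y = g.toAdd + y :=
  rfl

theorem translation_injective : Function.Injective (translation V) :=
  (injective_iff_map_eq_one _).2 fun g hg => by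
    have h : g.toAdd + 0 = 0 := Equiv.ext_iff.1 hg 0
    rwa [add_zero, toAdd_eq_zero] at h

variable [Fintype V] [DecidableEq V]

theorem invariantAug_range_translation :
    invariantAug (translation V).range V = AddSubgroup.zmultiples (Fintype.card V : ℤ) := by
  apply le_antisymm
  · rintro _ ⟨v, hv, rfl⟩
    have hconst : ∀ y, v y = v 0 := fun y => by
      have h : v (translation V (.ofAdd y) 0) = v 0 := hv ⟨_, _, rfl⟩ 0
      rwa [translation_apply, toAdd_ofAdd, add_zero] at h
    rw [Finset.sum_congr rfl fun y _ => hconst y, Finset.sum_const, Finset.card_univ, nsmul_eq_mul]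
    exact Int.mem_zmultiples_iff.2 (dvd_mul_right _ _)
  · have h := intCast_card_mem_invariantAug (Finset.univ : Finset V) (C := (translation V).range)
      (by simp)
    rwa [Finset.card_univ, ← AddSubgroup.zmultiples_le] at h

theorem zmultiples_addOrderOf_le_invariantAug_zpowers_translation (g : Multiplicative V) :
    AddSubgroup.zmultiples (addOrderOf g.toAdd : ℤ) ≤
      invariantAug (Subgroup.zpowers (translation V g)) V := by
  classical
  have h := intCast_card_mem_invariantAug_zpowers (translation V g)
    (AddSubgroup.zmultiples g.toAdd : Set V).toFinset fun y => by
      rw [Set.mem_toFinset, Set.mem_toFinset, Equiv.Perm.smul_def, translation_apply]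
      exact AddSubgroup.add_mem_cancel_left _ (AddSubgroup.mem_zmultiples _)
  rwa [Set.toFinset_card, ← Nat.card_eq_fintype_card, SetLike.coe_sort_coe, Nat.card_zmultiples,
    ← AddSubgroup.zmultiples_le] at h

end Translation

section Plane

variable {p : ℕ}

theorem invariantAug_zpowers_translation_le [NeZero p] :
    invariantAug (Subgroup.zpowers (translation (ZMod p × ZMod p) (.ofAdd (1, 0))))
      (ZMod p × ZMod p) ≤ AddSubgroup.zmultiples (p : ℤ) := by
  intro t ht
  obtain ⟨v, hv, rfl⟩ := (mem_invariantAug_zpowers_iff _).1 ht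
  have hper : ∀ u, Function.Periodic (fun s => v (s, u)) 1 := fun u s => by
    have h := hv (s, u)
    rw [Equiv.Perm.smul_def, translation_apply] at h
    simpa [add_comm] using h
  rw [Int.mem_zmultiples_iff, Fintype.sum_prod_type_right]
  exact Finset.dvd_sum fun u _ => by
    rw [sum_eq_mul_of_periodic_one (hper u)]
    exact dvd_mul_right _ _

theorem iInf_invariantAug_zpowers_translation [NeZero p] :
    ⨅ g, invariantAug (Subgroup.zpowers (translation (ZMod p × ZMod p) g)) (ZMod p × ZMod p) =
      AddSubgroup.zmultiples (p : ℤ) := by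
  refine le_antisymm (iInf_le_of_le _ invariantAug_zpowers_translation_le) (le_iInf fun g => ?_)
  have hdvd : (addOrderOf g.toAdd : ℤ) ∣ p :=
    Int.natCast_dvd_natCast.2 (addOrderOf_dvd_of_nsmul_eq_zero (by ext <;> simp))
  exact (AddSubgroup.zmultiples_le.2 (Int.mem_zmultiples_iff.2 hdvd)).trans
    (zmultiples_addOrderOf_le_invariantAug_zpowers_translation g)

def lineFunctional (p : ℕ) {m : ℕ} (j : Fin m) : ZMod p × ZMod p →+ ZMod p :=
  if (j : ℕ) < p then
    AddMonoidHom.fst _ _ + (AddMonoidHom.mulLeft (j : ZMod p)).comp (AddMonoidHom.snd _ _)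
  else AddMonoidHom.snd _ _

variable {m : ℕ}

theorem lineFunctional_of_lt {j : Fin m} (hj : (j : ℕ) < p) (a : ZMod p × ZMod p) :
    lineFunctional p j a = a.1 + j * a.2 := by
  simp [lineFunctional, hj]

theorem lineFunctional_of_le {j : Fin m} (hj : p ≤ (j : ℕ)) (a : ZMod p × ZMod p) :
    lineFunctional p j a = a.2 := by
  simp [lineFunctional, hj.not_gt]

theorem exists_lineFunctional_eq_one (j : Fin m) : ∃ a, lineFunctional p j a = 1 := by
  by_cases hj : (j : ℕ) < p
  · exact ⟨(1, 0), by simp [lineFunctional_of_lt hj]⟩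
  · exact ⟨(0, 1), by simp [lineFunctional_of_le (not_lt.1 hj)]⟩

theorem eq_zero_of_forall_lineFunctional_eq_zero [NeZero p] (hpm : p < m) {a : ZMod p × ZMod p}
    (ha : ∀ j : Fin m, lineFunctional p j a = 0) : a = 0 := by
  have h₁ := ha ⟨0, by omega⟩
  have h₂ := ha ⟨p, hpm⟩
  rw [lineFunctional_of_lt (NeZero.pos p)] at h₁
  rw [lineFunctional_of_le (j := ⟨p, hpm⟩) le_rfl] at h₂
  simp only [Nat.cast_zero, zero_mul, add_zero] at h₁
  exact Prod.ext h₁ h₂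

theorem exists_lineFunctional_eq_zero [Fact p.Prime] (hpm : p < m) (a : ZMod p × ZMod p) :
    ∃ j : Fin m, lineFunctional p j a = 0 := by
  by_cases h₂ : a.2 = 0
  · exact ⟨⟨p, hpm⟩, by rw [lineFunctional_of_le (j := ⟨p, hpm⟩) le_rfl, h₂]⟩
  · set s : ZMod p := -a.1 / a.2
    refine ⟨⟨s.val, s.val_lt.trans hpm⟩, ?_⟩
    rw [lineFunctional_of_lt s.val_lt]
    simp [s, div_mul_cancel₀ _ h₂]

end Plane

theorem exists_subgroup_sha1_addEquiv_zmod_of_lt {n p m : ℕ} (hp : p.Prime) (hpm : p < m)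
    (hn : m * p = n) :
    ∃ H : Subgroup (Equiv.Perm (Fin n)),
      Nonempty (H ≃* Multiplicative (ZMod p × ZMod p)) ∧
      Nonempty (Sha1 H (rootLat n) ≃+ ZMod p) := by
  have := Fact.mk hp
  have : Nonempty (Fin m) := ⟨⟨0, by omega⟩⟩
  refine exists_subgroup_sha1_addEquiv_zmod (fiberTranslation (lineFunctional p (m := m)))
    (fiberTranslation_injective fun _ => eq_zero_of_forall_lineFunctional_eq_zero hpm)
    (Fintype.equivFinOfCardEq (by simp [hn])) one_ne_zero ?_ ?_
  · rw [one_mul]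
    exact invariantAug_range_fiberTranslation exists_lineFunctional_eq_one
  · rw [Int.zmultiples_one]
    exact iInf_eq_top.2 fun g =>
      (exists_lineFunctional_eq_zero hpm g.toAdd).elim fun _ hj =>
        invariantAug_zpowers_fiberTranslation hj

theorem exists_subgroup_sha1_addEquiv_zmod_of_sq {n p : ℕ} (hp : p.Prime) (hn : p * p = n) :
    ∃ H : Subgroup (Equiv.Perm (Fin n)),
      Nonempty (H ≃* Multiplicative (ZMod p × ZMod p)) ∧
      Nonempty (Sha1 H (rootLat n) ≃+ ZMod p) := by
  have := Fact.mk hp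
  refine exists_subgroup_sha1_addEquiv_zmod (translation (ZMod p × ZMod p)) translation_injective
    (Fintype.equivFinOfCardEq (by simp [hn])) (c := p) (by exact_mod_cast hp.ne_zero) ?_
    iInf_invariantAug_zpowers_translation
  rw [invariantAug_range_translation]
  simp

theorem stmt_16 (n p : ℕ) (h2 : 2 ≤ n) (hnp : ¬ n.Prime) (hp : p = n.minFac) :
    ∃ H : Subgroup (Equiv.Perm (Fin n)),
      Nonempty (H ≃* Multiplicative (ZMod p × ZMod p)) ∧
      Nonempty (Sha1 H (rootLat n) ≃+ ZMod p) := by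
  subst hp
  have hprime : n.minFac.Prime := Nat.minFac_prime (by omega)
  have hcofactor : n / n.minFac * n.minFac = n := Nat.div_mul_cancel n.minFac_dvd
  have hle : n.minFac ≤ n / n.minFac := (Nat.le_div_iff_mul_le hprime.pos).2 <| by
    simpa [sq] using Nat.minFac_sq_le_self (by omega) hnp
  rcases hle.lt_or_eq with hlt | heq
  · exact exists_subgroup_sha1_addEquiv_zmod_of_lt hprime hlt hcofactor
  · exact exists_subgroup_sha1_addEquiv_zmod_of_sq hprime (by nth_rewrite 1 [heq]; exact hcofactor)
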